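/- If I and J are ideals in a polynomial ring generated by linearly independent linear forms (i.e., after a linear change of coordinates they become monomial ideals generated in disjoint sets of variables), then (I ∩ J)^d = I^d ∩ J^d for all d ≥ 1. In particular this holds for K0 = (x1, x3) and K0' = (x2, x4) in C[x1,x2,x3,x4]. -/
import Mathlib


open MvPolynomial

noncomputable def K0 : Ideal (MvPolynomial (Fin 4) ℂ) := Ideal.span {X 0, X 2}
noncomputable def K0' : Ideal (MvPolynomial (Fin 4) ℂ) := Ideal.span {X 1, X 3}

/-- The ideal of polynomials each of whose monomials has degree ≥ d in variables i, j. -/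
noncomputable def SA (i j : Fin 4) (d : ℕ) : Ideal (MvPolynomial (Fin 4) ℂ) where
  carrier := {p | ∀ m ∈ p.support, d ≤ m i + m j}
  add_mem' := by
    intro a b ha hb m hm
    rcases Finset.mem_union.mp (MvPolynomial.support_add hm) with h | h
    exacts [ha m h, hb m h]
  zero_mem' := by simp
  smul_mem' := by
    intro c p hp m hm
    have h := MvPolynomial.support_mul c p hm
    rw [Finset.mem_add] at h
    obtain ⟨m1, _, m2, hm2, rfl⟩ := h
    have := hp m2 hm2
    simp only [Finsupp.add_apply]
    omega

lemma mul_mem_SA {i j : Fin 4} {d e : ℕ} {p q : MvPolynomial (Fin 4) ℂ}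
    (hp : p ∈ SA i j d) (hq : q ∈ SA i j e) : p * q ∈ SA i j (d + e) := by
  intro m hm
  have h := MvPolynomial.support_mul p q hm
  rw [Finset.mem_add] at h
  obtain ⟨m1, hm1, m2, hm2, rfl⟩ := h
  have h1 := hp m1 hm1
  have h2 := hq m2 hm2
  simp only [Finsupp.add_apply]
  omega

lemma pow_le_SA (i j : Fin 4) (d : ℕ) :
    Ideal.span {X i, X j} ^ d ≤ SA i j d := by
  induction d with
  | zero => intro p _ m _; exact Nat.zero_le _
  | succ n ih =>
    rw [pow_succ]
    apply Ideal.mul_le.2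
    intro r hr s hs
    have hspan : Ideal.span {X i, X j} ≤ SA i j 1 := by
      rw [Ideal.span_le]
      rintro s hs
      rcases hs with h | h <;> subst h <;>
        · intro m hm
          rw [MvPolynomial.support_X] at hm
          simp only [Finset.mem_singleton] at hm
          subst hm
          simp [Finsupp.single_apply]
    exact mul_mem_SA (ih hr) (hspan hs)

lemma pow_mul_pow_mem (i j : Fin 4) (a b d : ℕ) (h : d ≤ a + b) :
    X i ^ a * X j ^ b ∈ (Ideal.span {X i, X j} : Ideal (MvPolynomial (Fin 4) ℂ)) ^ d := by
  have hi : (X i : MvPolynomial (Fin 4) ℂ) ∈ Ideal.span {X i, X j} :=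
    Ideal.subset_span (by simp)
  have hj : (X j : MvPolynomial (Fin 4) ℂ) ∈ Ideal.span {X i, X j} :=
    Ideal.subset_span (by simp)
  have := Ideal.mul_mem_mul (Ideal.pow_mem_pow hi a) (Ideal.pow_mem_pow hj b)
  rw [← pow_add] at this
  exact Ideal.pow_le_pow_right h this

lemma monomial_decomp (m : Fin 4 →₀ ℕ) (c : ℂ) :
    (monomial m c : MvPolynomial (Fin 4) ℂ)
      = C c * ((X 0 ^ m 0 * X 2 ^ m 2) * (X 1 ^ m 1 * X 3 ^ m 3)) := by
  rw [MvPolynomial.monomial_eq]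
  congr 1
  rw [Finsupp.prod_fintype _ _ (fun i => pow_zero (X i))]
  rw [Fin.prod_univ_four]
  ring

/-- For ideals generated by linearly independent linear forms, powers commute with
intersection; in particular for K0 = (x1,x3) and K0' = (x2,x4). -/
theorem stmt2 (d : ℕ) : (K0 ⊓ K0') ^ d = K0 ^ d ⊓ K0' ^ d := by
  apply le_antisymm
  · exact le_inf (Ideal.pow_right_mono inf_le_left d)
      (Ideal.pow_right_mono inf_le_right d)
  · intro p hp
    obtain ⟨hpA, hpB⟩ := hp
    have hA : ∀ m ∈ p.support, d ≤ m 0 + m 2 := pow_le_SA 0 2 d hpA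
    have hB : ∀ m ∈ p.support, d ≤ m 1 + m 3 := pow_le_SA 1 3 d hpB
    have hle : K0 ^ d * K0' ^ d ≤ (K0 ⊓ K0') ^ d := by
      rw [← mul_pow]
      exact Ideal.pow_right_mono Ideal.mul_le_inf d
    rw [← MvPolynomial.support_sum_monomial_coeff p]
    apply Ideal.sum_mem
    intro m hm
    rw [monomial_decomp]
    apply Ideal.mul_mem_left
    exact hle (Ideal.mul_mem_mul (pow_mul_pow_mem 0 2 (m 0) (m 2) d (hA m hm))
      (pow_mul_pow_mem 1 3 (m 1) (m 3) d (hB m hm)))
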